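/- Let t ≥ 4 be an integer and let G be a finite simple graph containing a copy of H_t as a subgraph. Then the K_{2,t}-bootstrap closure Ĝ of G contains a copy of K_{t−1,t−1} as a subgraph. -/

import Mathlib

/-!
Write `Ĝ` for the `K_{2,t}`-bootstrap closure. If `x` and `x'` have `t - 1` common neighbours
in `Ĝ`, then `x` is adjacent in `Ĝ` to every other neighbour `z` of `x'`, because adding `xz`
completes a `K_{2,t}`. In `H_t` this lets each `u_i` inherit the neighbours `v, v_k` of `u`
(the common neighbours being the `t - 1` vertices of the `i`-th `K_{2,t-1}`); then each `v_i`
inherits `w, w_j` from `v` (via `u`, the `u_a` and its own `s - 1` vertices); then each `w_j`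
inherits all the `K_{2,r-1}`-vertices at `w` (via `v`, the `v_a` and its own `r - 1` vertices).
Now `{w, w_1, …, w_{t-2}}` and `{v, v_1, …, v_s}` together with the `r - 1` vertices of one
`K_{2,r-1}` at `w` span a `K_{t-1,t-1}`. Since the closure is monotone under embeddings, a copy
of `H_t` in `G` carries it into the closure of `G`.
-/

/-- `G` contains a copy of `H` as a subgraph. -/
def HasCopy {W V : Type*} (H : SimpleGraph W) (G : SimpleGraph V) : Prop :=
  ∃ f : W → V, Function.Injective f ∧ ∀ ⦃a b : W⦄, H.Adj a b → G.Adj (f a) (f b)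

/-- Adding the edge `{x, y}` to `G` creates a new copy of `H` containing that edge. -/
def CreatesCopy {W V : Type*} (H : SimpleGraph W) (G : SimpleGraph V) (x y : V) : Prop :=
  ∃ f : W → V, Function.Injective f ∧
    (∀ ⦃a b : W⦄, H.Adj a b →
      G.Adj (f a) (f b) ∨ (f a = x ∧ f b = y) ∨ (f a = y ∧ f b = x)) ∧
    ∃ a b : W, H.Adj a b ∧ ((f a = x ∧ f b = y) ∨ (f a = y ∧ f b = x))

/-- One step of the `H`-bootstrap process: add to `G` all non-edges whose addition
creates a new copy of `H` containing them. -/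
def bootStep {W V : Type*} (H : SimpleGraph W) (G : SimpleGraph V) : SimpleGraph V where
  Adj x y := G.Adj x y ∨ (¬ G.Adj x y ∧ x ≠ y ∧ CreatesCopy H G x y)
  symm := by
    constructor
    intro x y h
    rcases h with h | ⟨hn, hne, f, hf, hmap, a, b, hab, hor⟩
    · exact Or.inl h.symm
    · exact Or.inr ⟨fun h' => hn h'.symm, hne.symm, f, hf,
        fun a b hab => by have := hmap hab; tauto, a, b, hab, hor.symm⟩
  loopless := by
    constructor
    intro x h
    rcases h with h | ⟨_, hne, _⟩
    · exact G.loopless.irrefl x h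
    · exact hne rfl

def bootSeq {W V : Type*} (H : SimpleGraph W) (G : SimpleGraph V) : ℕ → SimpleGraph V
  | 0 => G
  | n + 1 => bootStep H (bootSeq H G n)

/-- The `H`-bootstrap closure of `G`: the union of the iterated bootstrap steps. -/
def bootClosure {W V : Type*} (H : SimpleGraph W) (G : SimpleGraph V) : SimpleGraph V :=
  ⨆ n, bootSeq H G n

/-- `G` percolates in the `H`-bootstrap process, i.e. its closure is complete. -/
def Percolates {W V : Type*} (H : SimpleGraph W) (G : SimpleGraph V) : Prop :=
  bootClosure H G = ⊤

abbrev GVert (r s : ℕ) := Unit ⊕ Fin s ⊕ Fin s × Fin r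

def GRel (r s : ℕ) : GVert r s → GVert r s → Prop := fun a b =>
  match a, b with
  | Sum.inl _, Sum.inr (Sum.inr _) => True
  | Sum.inr (Sum.inl i), Sum.inr (Sum.inr p) => p.1 = i
  | _, _ => False

/-- The graph `G_r(u; u_1, …, u_s)`: `s` copies of `K_{2,r}`, where `{u_i, u_i'}` is the
part of size 2 of the `i`-th copy, glued by identifying all `u_i'` to one vertex `u`.
Here `Sum.inl ()` is `u`, `Sum.inr (Sum.inl i)` is `u_i`, and `Sum.inr (Sum.inr (i, j))`
is the `j`-th vertex of the part of size `r` in the `i`-th copy. -/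
def GStar (r s : ℕ) : SimpleGraph (GVert r s) := SimpleGraph.fromRel (GRel r s)

def htr (t : ℕ) : ℕ := (t - 1) / 2
def hts (t : ℕ) : ℕ := t - 1 - htr t

abbrev HtV (t : ℕ) :=
  GVert (t - 1) (htr t) ⊕ GVert (hts t - 1) (hts t) ⊕ GVert (htr t - 1) (t - 2)

/-- For `r = ⌊(t-1)/2⌋`, `s = t - 1 - r`: the disjoint union of `G_{t-1}(u; u_1, …, u_r)`,
`G_{s-1}(v; v_1, …, v_s)` and `G_{r-1}(w; w_1, …, w_{t-2})`, joining `u` to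
`v, v_1, …, v_s` and `v` to `w, w_1, …, w_{t-2}`. -/
def HtRel (t : ℕ) : HtV t → HtV t → Prop := fun a b =>
  match a, b with
  | Sum.inl x, Sum.inl y => GRel _ _ x y
  | Sum.inr (Sum.inl x), Sum.inr (Sum.inl y) => GRel _ _ x y
  | Sum.inr (Sum.inr x), Sum.inr (Sum.inr y) => GRel _ _ x y
  | Sum.inl (Sum.inl _), Sum.inr (Sum.inl (Sum.inl _)) => True
  | Sum.inl (Sum.inl _), Sum.inr (Sum.inl (Sum.inr (Sum.inl _))) => True
  | Sum.inr (Sum.inl (Sum.inl _)), Sum.inr (Sum.inr (Sum.inl _)) => True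
  | Sum.inr (Sum.inl (Sum.inl _)), Sum.inr (Sum.inr (Sum.inr (Sum.inl _))) => True
  | _, _ => False

/-- The graph `H_t`. -/
def Ht (t : ℕ) : SimpleGraph (HtV t) := SimpleGraph.fromRel (HtRel t)

open Finset Filter Function

section Bootstrap

variable {W V : Type*} {H : SimpleGraph W} {G : SimpleGraph V}

lemma HasCopy.trans {U : Type*} {F : SimpleGraph U} (hF : HasCopy F H) (hH : HasCopy H G) :
    HasCopy F G := by
  obtain ⟨f, hf, hf_adj⟩ := hF
  obtain ⟨g, hg, hg_adj⟩ := hH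
  exact ⟨g ∘ f, hg.comp hf, fun _ _ hab => hg_adj (hf_adj hab)⟩

lemma bootSeq_monotone (H : SimpleGraph W) (G : SimpleGraph V) : Monotone (bootSeq H G) :=
  monotone_nat_of_le_succ fun _ _ _ h => Or.inl h

lemma bootSeq_le_bootClosure (n : ℕ) : bootSeq H G n ≤ bootClosure H G :=
  le_iSup (bootSeq H G) n

lemma le_bootClosure : G ≤ bootClosure H G :=
  bootSeq_le_bootClosure 0

lemma eventually_bootSeq_adj {x y : V} (h : (bootClosure H G).Adj x y) :
    ∀ᶠ n in atTop, (bootSeq H G n).Adj x y := by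
  obtain ⟨n, hn⟩ := SimpleGraph.iSup_adj.1 h
  exact eventually_atTop.2 ⟨n, fun _ hm => bootSeq_monotone H G hm hn⟩

/-- A copy of the finite graph `H` uses only finitely many edges of the closure, and they are
all present at some finite stage. -/
lemma bootClosure_adj_of_createsCopy [Finite W] {x y : V} (hxy : x ≠ y)
    (h : CreatesCopy H (bootClosure H G) x y) : (bootClosure H G).Adj x y := by
  obtain ⟨f, hf, hf_adj, hnew⟩ := h
  have : ∀ᶠ n in atTop, ∀ a b, H.Adj a b →
      (bootSeq H G n).Adj (f a) (f b) ∨ (f a = x ∧ f b = y) ∨ (f a = y ∧ f b = x) := by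
    refine eventually_all.2 fun a => eventually_all.2 fun b =>
      eventually_imp_distrib_left.2 fun hab => ?_
    rcases hf_adj hab with h | h
    · exact (eventually_bootSeq_adj h).mono fun _ => Or.inl
    · exact Eventually.of_forall fun _ => Or.inr h
  obtain ⟨n, hn⟩ := this.exists
  by_cases hadj : (bootSeq H G n).Adj x y
  · exact bootSeq_le_bootClosure n hadj
  · exact bootSeq_le_bootClosure (n + 1) (Or.inr ⟨hadj, hxy, f, hf, fun a b => hn a b, hnew⟩)

section Transfer

variable {V' : Type*} {G' : SimpleGraph V'} {f : V' → V} (hf : Injective f)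
  (hf_adj : ∀ ⦃a b : V'⦄, G'.Adj a b → G.Adj (f a) (f b))
include hf hf_adj

lemma CreatesCopy.map {x y : V'} (h : CreatesCopy H G' x y) : CreatesCopy H G (f x) (f y) := by
  obtain ⟨g, hg, hg_adj, a, b, hab, hxy⟩ := h
  refine ⟨f ∘ g, hf.comp hg, fun p q hpq => ?_, a, b, hab, ?_⟩
  · rcases hg_adj hpq with h | ⟨hp, hq⟩ | ⟨hp, hq⟩
    · exact Or.inl (hf_adj h)
    · exact Or.inr (Or.inl ⟨congrArg f hp, congrArg f hq⟩)
    · exact Or.inr (Or.inr ⟨congrArg f hp, congrArg f hq⟩)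
  · rcases hxy with ⟨ha, hb⟩ | ⟨ha, hb⟩
    · exact Or.inl ⟨congrArg f ha, congrArg f hb⟩
    · exact Or.inr ⟨congrArg f ha, congrArg f hb⟩

lemma bootStep_adj_map {x y : V'} (h : (bootStep H G').Adj x y) :
    (bootStep H G).Adj (f x) (f y) := by
  rcases h with h | ⟨-, hxy, hcopy⟩
  · exact Or.inl (hf_adj h)
  by_cases hadj : G.Adj (f x) (f y)
  · exact Or.inl hadj
  · exact Or.inr ⟨hadj, hf.ne hxy, hcopy.map hf hf_adj⟩

lemma bootClosure_adj_map {x y : V'} (h : (bootClosure H G').Adj x y) :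
    (bootClosure H G).Adj (f x) (f y) := by
  have hseq : ∀ n ⦃x y : V'⦄, (bootSeq H G' n).Adj x y →
      (bootSeq H G n).Adj (f x) (f y) := by
    intro n
    induction n with
    | zero => exact hf_adj
    | succ n ih => exact fun _ _ h => bootStep_adj_map hf ih h
  obtain ⟨n, hn⟩ := SimpleGraph.iSup_adj.1 h
  exact bootSeq_le_bootClosure n (hseq n hn)

end Transfer

lemma HasCopy.bootClosure {V' : Type*} {G' : SimpleGraph V'} (h : HasCopy G' G) :
    HasCopy (_root_.bootClosure H G') (_root_.bootClosure H G) :=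
  let ⟨f, hf, hf_adj⟩ := h
  ⟨f, hf, fun _ _ => bootClosure_adj_map hf hf_adj⟩

end Bootstrap

section CompleteBipartite

variable {V : Type*} {Γ : SimpleGraph V}

lemma hasCopy_completeBipartiteGraph {ι κ : Type*} [Fintype ι] [Fintype κ] {s t : ℕ}
    {f : ι → V} {g : κ → V} (hfg : Injective (Sum.elim f g)) (hι : s ≤ Fintype.card ι)
    (hκ : t ≤ Fintype.card κ) (hadj : ∀ i j, Γ.Adj (f i) (g j)) :
    HasCopy (completeBipartiteGraph (Fin s) (Fin t)) Γ := by
  obtain ⟨eι⟩ := Function.Embedding.nonempty_of_card_le (α := Fin s) (β := ι)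
    (by simpa using hι)
  obtain ⟨eκ⟩ := Function.Embedding.nonempty_of_card_le (α := Fin t) (β := κ)
    (by simpa using hκ)
  refine ⟨Sum.elim f g ∘ Sum.map eι eκ, hfg.comp (eι.injective.sumMap eκ.injective), ?_⟩
  rintro (i | j) (i' | j') h <;> simp at h
  · exact hadj _ _
  · exact (hadj _ _).symm

lemma exists_injective_sumElim_range_eq {A B : Finset V} (hAB : Disjoint A B) :
    ∃ (f : Fin #A → V) (g : Fin #B → V),
      Injective (Sum.elim f g) ∧ Set.range f = A ∧ Set.range g = B := by
  refine ⟨(↑) ∘ A.equivFin.symm, (↑) ∘ B.equivFin.symm, ?_, ?_, ?_⟩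
  · refine Injective.sumElim (Subtype.val_injective.comp A.equivFin.symm.injective)
      (Subtype.val_injective.comp B.equivFin.symm.injective) fun i j h => ?_
    have h : (A.equivFin.symm i : V) = B.equivFin.symm j := h
    exact disjoint_left.1 hAB (A.equivFin.symm i).2 (h ▸ (B.equivFin.symm j).2)
  · rw [A.equivFin.symm.surjective.range_comp, Subtype.range_coe_subtype]; rfl
  · rw [B.equivFin.symm.surjective.range_comp, Subtype.range_coe_subtype]; rfl

lemma createsCopy_completeBipartiteGraph {A B : Finset V} {s t : ℕ} {x z : V}
    (hAB : Disjoint A B) (hA : #A = s) (hB : #B = t) (hx : x ∈ A) (hz : z ∈ B)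
    (hadj : ∀ a ∈ A, ∀ b ∈ B, Γ.Adj a b ∨ (a = x ∧ b = z)) :
    CreatesCopy (completeBipartiteGraph (Fin s) (Fin t)) Γ x z := by
  subst hA hB
  obtain ⟨f, g, hfg, hf, hg⟩ := exists_injective_sumElim_range_eq hAB
  have hfA (i) : f i ∈ A := by rw [← mem_coe, ← hf]; exact Set.mem_range_self i
  have hgB (j) : g j ∈ B := by rw [← mem_coe, ← hg]; exact Set.mem_range_self j
  obtain ⟨i, rfl⟩ : x ∈ Set.range f := hf ▸ hx
  obtain ⟨j, rfl⟩ : z ∈ Set.range g := hg ▸ hz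
  refine ⟨Sum.elim f g, hfg, ?_, .inl i, .inr j, by simp, Or.inl ⟨rfl, rfl⟩⟩
  rintro (i | j) (i' | j') h <;> simp at h
  · exact (hadj _ (hfA i) _ (hgB j')).imp_right Or.inl
  · exact (hadj _ (hfA i') _ (hgB j)).elim (Or.inl ∘ SimpleGraph.Adj.symm)
      (Or.inr ∘ Or.inr ∘ And.symm)

end CompleteBipartite

theorem bootClosure_adj_of_commonNeighbors {V ι : Type*} [Fintype ι] {G : SimpleGraph V} {t : ℕ}
    (ht : 0 < t) {x x' z : V} {c : ι → V} (hc : Injective c) (hι : t - 1 ≤ Fintype.card ι)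
    (hcz : ∀ i, c i ≠ z) (hxz : x ≠ z)
    (hxc : ∀ i, (bootClosure (completeBipartiteGraph (Fin 2) (Fin t)) G).Adj x (c i))
    (hx'c : ∀ i, (bootClosure (completeBipartiteGraph (Fin 2) (Fin t)) G).Adj x' (c i))
    (hx'z : (bootClosure (completeBipartiteGraph (Fin 2) (Fin t)) G).Adj x' z) :
    (bootClosure (completeBipartiteGraph (Fin 2) (Fin t)) G).Adj x z := by
  classical
  obtain rfl | hxx' := eq_or_ne x x'
  · exact hx'z
  obtain ⟨C, hCsub, hC⟩ :=
    exists_subset_card_eq (s := univ.map ⟨c, hc⟩) (n := t - 1) (by simpa using hι)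
  have hCc (y) (hy : y ∈ C) : ∃ i, c i = y := by simpa using hCsub hy
  have hzC : z ∉ C := fun hz => (hCc z hz).elim hcz
  have hB : #(insert z C) = t := by rw [card_insert_of_notMem hzC, hC]; omega
  have hAB : Disjoint {x, x'} (insert z C) := by
    simp only [disjoint_insert_left, disjoint_singleton_left, mem_insert, not_or]
    refine ⟨⟨hxz, fun h => ?_⟩, ⟨hx'z.ne, fun h => ?_⟩⟩
    · obtain ⟨i, hi⟩ := hCc x h
      exact (hxc i).ne hi.symm
    · obtain ⟨i, hi⟩ := hCc x' h
      exact (hx'c i).ne hi.symm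
  refine bootClosure_adj_of_createsCopy hxz <| createsCopy_completeBipartiteGraph hAB
    (card_pair hxx') hB (mem_insert_self _ _) (mem_insert_self _ _) fun a ha b hb => ?_
  rw [mem_insert, mem_singleton] at ha
  rw [mem_insert] at hb
  rcases ha with rfl | rfl <;> rcases hb with rfl | hb
  · exact Or.inr ⟨rfl, rfl⟩
  · obtain ⟨i, rfl⟩ := hCc b hb
    exact Or.inl (hxc i)
  · exact Or.inl hx'z
  · obtain ⟨i, rfl⟩ := hCc b hb
    exact Or.inl (hx'c i)

namespace Ht

variable {t : ℕ}

lemma htr_add_hts (t : ℕ) : htr t + hts t = t - 1 := by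
  unfold hts htr
  omega

def u : HtV t := .inl (.inl ())
def ui (i : Fin (htr t)) : HtV t := .inl (.inr (.inl i))
/-- The `j`-th vertex of the part of size `t - 1` of the `i`-th copy of `K_{2,t-1}` at `u`;
`vPart` and `wPart` are the analogous vertices at `v` and `w`. -/
def uPart (i : Fin (htr t)) (j : Fin (t - 1)) : HtV t := .inl (.inr (.inr (i, j)))
def v : HtV t := .inr (.inl (.inl ()))
def vi (i : Fin (hts t)) : HtV t := .inr (.inl (.inr (.inl i)))
def vPart (i : Fin (hts t)) (j : Fin (hts t - 1)) : HtV t := .inr (.inl (.inr (.inr (i, j))))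
def w : HtV t := .inr (.inr (.inl ()))
def wi (i : Fin (t - 2)) : HtV t := .inr (.inr (.inr (.inl i)))
def wPart (i : Fin (t - 2)) (j : Fin (htr t - 1)) : HtV t := .inr (.inr (.inr (.inr (i, j))))

abbrev closure (t : ℕ) : SimpleGraph (HtV t) :=
  bootClosure (completeBipartiteGraph (Fin 2) (Fin t)) (Ht t)

section Steps

variable (ht : 0 < t)
include ht

lemma ui_adj_of_u_adj (i : Fin (htr t)) {z : HtV t} (hz : (closure t).Adj u z)
    (hzi : ∀ j, z ≠ uPart i j) (hiz : ui i ≠ z) : (closure t).Adj (ui i) z :=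
  bootClosure_adj_of_commonNeighbors ht (c := uPart i)
    (fun j j' h => by simpa [uPart] using h) (by simp) (fun j => (hzi j).symm) hiz
    (fun j => le_bootClosure (by simp [Ht, HtRel, GRel, ui, uPart]))
    (fun j => le_bootClosure (by simp [Ht, HtRel, GRel, u, uPart])) hz

lemma ui_adj_v (i : Fin (htr t)) : (closure t).Adj (ui i) v :=
  ui_adj_of_u_adj ht i (le_bootClosure (by simp [Ht, HtRel, u, v])) (by simp [v, uPart])
    (by simp [ui, v])

lemma ui_adj_vi (i : Fin (htr t)) (k : Fin (hts t)) : (closure t).Adj (ui i) (vi k) :=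
  ui_adj_of_u_adj ht i (le_bootClosure (by simp [Ht, HtRel, u, vi])) (by simp [vi, uPart])
    (by simp [ui, vi])

lemma vi_adj_of_v_adj (i : Fin (hts t)) {z : HtV t} (hz : (closure t).Adj v z)
    (hzu : ∀ a, z ≠ .inl a) (hzi : ∀ j, z ≠ vPart i j) (hiz : vi i ≠ z) :
    (closure t).Adj (vi i) z := by
  refine bootClosure_adj_of_commonNeighbors ht
    (c := Sum.elim (fun _ : Unit => u) (Sum.elim ui (vPart i))) ?_ ?_ ?_ hiz ?_ ?_ hz
  · rintro (_ | a | a) (_ | b | b) h <;> simp_all [u, ui, vPart]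
  · simp only [Fintype.card_sum, Fintype.card_unit, Fintype.card_fin]
    have := htr_add_hts t
    omega
  · rintro (_ | a | a) <;> simp_all [u, ui, vPart, eq_comm (b := z)]
  · rintro (_ | a | a)
    · exact le_bootClosure (by simp [Ht, HtRel, u, vi])
    · exact (ui_adj_vi ht a i).symm
    · exact le_bootClosure (by simp [Ht, HtRel, GRel, vi, vPart])
  · rintro (_ | a | a)
    · exact le_bootClosure (by simp [Ht, HtRel, u, v])
    · exact (ui_adj_v ht a).symm
    · exact le_bootClosure (by simp [Ht, HtRel, GRel, v, vPart])

lemma vi_adj_w (i : Fin (hts t)) : (closure t).Adj (vi i) w :=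
  vi_adj_of_v_adj ht i (le_bootClosure (by simp [Ht, HtRel, v, w])) (by simp [w])
    (by simp [w, vPart]) (by simp [vi, w])

lemma vi_adj_wi (i : Fin (hts t)) (j : Fin (t - 2)) : (closure t).Adj (vi i) (wi j) :=
  vi_adj_of_v_adj ht i (le_bootClosure (by simp [Ht, HtRel, v, wi])) (by simp [wi])
    (by simp [wi, vPart]) (by simp [vi, wi])

lemma wi_adj_wPart (j k : Fin (t - 2)) (m : Fin (htr t - 1)) :
    (closure t).Adj (wi j) (wPart k m) := by
  obtain rfl | hkj := eq_or_ne k j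
  · exact le_bootClosure (by simp [Ht, HtRel, GRel, wi, wPart])
  refine bootClosure_adj_of_commonNeighbors ht (x' := w)
    (c := Sum.elim (fun _ : Unit => v) (Sum.elim vi (wPart j))) ?_ ?_ ?_ (by simp [wi, wPart])
    ?_ ?_ (le_bootClosure (by simp [Ht, HtRel, GRel, w, wPart]))
  · rintro (_ | a | a) (_ | b | b) h <;> simp_all [v, vi, wPart]
  · simp only [Fintype.card_sum, Fintype.card_unit, Fintype.card_fin]
    have := htr_add_hts t
    omega
  · rintro (_ | a | a) <;> simp [v, vi, wPart, hkj.symm]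
  · rintro (_ | a | a)
    · exact le_bootClosure (by simp [Ht, HtRel, v, wi])
    · exact (vi_adj_wi ht a j).symm
    · exact le_bootClosure (by simp [Ht, HtRel, GRel, wi, wPart])
  · rintro (_ | a | a)
    · exact le_bootClosure (by simp [Ht, HtRel, v, w])
    · exact (vi_adj_w ht a).symm
    · exact le_bootClosure (by simp [Ht, HtRel, GRel, w, wPart])

end Steps

theorem hasCopy_closure (ht : 3 ≤ t) :
    HasCopy (completeBipartiteGraph (Fin (t - 1)) (Fin (t - 1))) (closure t) := by
  have j₀ : Fin (t - 2) := ⟨0, by omega⟩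
  refine hasCopy_completeBipartiteGraph (f := Sum.elim (fun _ : Unit => w) wi)
    (g := Sum.elim (fun _ : Unit => v) (Sum.elim vi (wPart j₀))) ?_ ?_ ?_ ?_
  · rintro ((_ | a) | (_ | a | a)) ((_ | b) | (_ | b | b)) h <;> simp_all [v, vi, w, wi, wPart]
  · simp only [Fintype.card_sum, Fintype.card_unit, Fintype.card_fin]
    omega
  · simp only [Fintype.card_sum, Fintype.card_unit, Fintype.card_fin]
    have := htr_add_hts t
    omega
  · rintro (_ | a) (_ | b | b)
    · exact le_bootClosure (by simp [Ht, HtRel, v, w])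
    · exact (vi_adj_w (by omega) b).symm
    · exact le_bootClosure (by simp [Ht, HtRel, GRel, w, wPart])
    · exact le_bootClosure (by simp [Ht, HtRel, v, wi])
    · exact (vi_adj_wi (by omega) b a).symm
    · exact wi_adj_wPart (by omega) a j₀ b

end Ht

theorem stmt_8_general {V : Type*} (t : ℕ) (ht : 4 ≤ t) (G : SimpleGraph V)
    (h : HasCopy (Ht t) G) :
    HasCopy (completeBipartiteGraph (Fin (t - 1)) (Fin (t - 1)))
      (bootClosure (completeBipartiteGraph (Fin 2) (Fin t)) G) :=
  (Ht.hasCopy_closure (by omega)).trans h.bootClosure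

theorem stmt_8 {V : Type*} [Fintype V] (t : ℕ) (ht : 4 ≤ t) (G : SimpleGraph V)
    (h : HasCopy (Ht t) G) :
    HasCopy (completeBipartiteGraph (Fin (t - 1)) (Fin (t - 1)))
      (bootClosure (completeBipartiteGraph (Fin 2) (Fin t)) G) :=
  stmt_8_general t ht G h
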